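/- For all integers r, s ≥ 1 and every i, the alternating sum Σ_{j=0}^{r} (-1)^j · S^{r-j}_s(i) · T^{j}_s(i + r - j) equals 0. -/

import Mathlib

variable {R : Type*} [CommRing R]

/-- Discrete polynomials `T^r_s(i)` (case `h = n = 1`), with the convention
`T^0_s = 1` and `T^r_s = 0` for `s = 0`, `r ≥ 1`. -/
def Tp (T : ℤ → R) : ℕ → ℕ → ℤ → R
  | 0, _, _ => 1
  | _ + 1, 0, _ => 0
  | r + 1, s + 1, i => Tp T (r + 1) s (i + 1) + T i * Tp T r s (i + 2)

/-- Discrete polynomials `S^r_s(i)` (case `h = n = 1`). -/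
def Sp (T : ℤ → R) : ℕ → ℕ → ℤ → R
  | 0, _, _ => 1
  | _ + 1, 0, _ => 0
  | r + 1, 1, i => ∏ q ∈ Finset.range (r + 1), T (i + q)
  | r + 1, s + 2, i => Sp T (r + 1) (s + 1) (i + 1) + T (i + r) * Sp T r (s + 2) i
  termination_by r s _ => r + s

/-! Expanding each summand of level `s + 2` at `i` by the recursions of `Sp` (in its lower index)
and of `Tp` gives the summand of level `s + 1` at `i + 1` plus a difference of consecutive values
of `stCorrection`, so the alternating sum telescopes to the same sum one level lower with `i`
shifted by one. At level `1` every `T^j_1` with `j ≥ 2` vanishes, and the two remaining summands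
`S^{r+1}_1(i) - S^r_1(i) T(i + r)` cancel. -/

open Finset

section

variable (T : ℤ → R)

@[simp] lemma Tp_zero (s : ℕ) (i : ℤ) : Tp T 0 s i = 1 := by rw [Tp]

lemma Tp_succ_succ (j s : ℕ) (i : ℤ) :
    Tp T (j + 1) (s + 1) i = Tp T (j + 1) s (i + 1) + T i * Tp T j s (i + 2) := rfl

lemma Tp_one_one (i : ℤ) : Tp T 1 1 i = T i := by simp [Tp]

lemma Tp_add_two_one (j : ℕ) (i : ℤ) : Tp T (j + 2) 1 i = 0 := by simp [Tp]

@[simp] lemma Sp_zero (s : ℕ) (i : ℤ) : Sp T 0 s i = 1 := by rw [Sp]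

lemma Sp_one (n : ℕ) (i : ℤ) : Sp T n 1 i = ∏ q ∈ range n, T (i + q) := by
  cases n <;> simp [Sp]

lemma Sp_succ_add_two (m s : ℕ) (i : ℤ) :
    Sp T (m + 1) (s + 2) i = Sp T (m + 1) (s + 1) (i + 1) + T (i + m) * Sp T m (s + 2) i := by
  rw [Sp]

def stSummand (r s : ℕ) (i : ℤ) (j : ℕ) : R :=
  (-1) ^ j * Sp T (r - j) s i * Tp T j s (i + r - j)

/-- `(S,T)^r_s(i)` -/
def stSum (r s : ℕ) (i : ℤ) : R :=
  ∑ j ∈ range (r + 1), stSummand T r s i j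

/-- With `S^{m+1}_{s+2}(i) = a + b c` and `T^{j+1}_{s+2}(x) = d + e f` expanded by the recursions,
`(a + b c)(d + e f) = a d + b c d + e f (a + b c)`: with the sign `(-1)^j`, `a d` is the summand
one level lower, `b c d` the correction at `j + 1` and `e f (a + b c)` minus the correction at `j`. -/
def stCorrection (r s : ℕ) (i : ℤ) : ℕ → R
  | 0 => 0
  | j + 1 => (-1) ^ j * T (i + r - (j + 1)) * Sp T (r - (j + 1)) (s + 2) i
      * Tp T j (s + 1) (i + r - (j + 1) + 2)

lemma stSummand_add_two_of_lt {r j : ℕ} (s : ℕ) (i : ℤ) (hj : j < r) :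
    stSummand T r (s + 2) i j = stSummand T r (s + 1) (i + 1) j
      + (stCorrection T r s i (j + 1) - stCorrection T r s i j) := by
  obtain ⟨k, rfl⟩ : ∃ k, r = j + k + 1 := ⟨r - j - 1, by omega⟩
  have hSp := Sp_succ_add_two T k s i
  simp only [stSummand, stCorrection, show j + k + 1 - j = k + 1 by omega,
    show j + k + 1 - (j + 1) = k by omega, hSp]
  cases j with
  | zero => simp only [Tp_zero]; push_cast; ring_nf
  | succ j =>
    simp only [Tp_succ_succ T j (s + 1), show j + 1 + k + 1 - (j + 1) = k + 1 by omega, hSp]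
    push_cast; ring_nf

lemma stSummand_add_two_self (r s : ℕ) (i : ℤ) :
    stSummand T r (s + 2) i r = stSummand T r (s + 1) (i + 1) r - stCorrection T r s i r := by
  cases r with
  | zero => simp [stSummand, stCorrection]
  | succ r =>
    simp only [stSummand, stCorrection, Tp_succ_succ T r (s + 1), Nat.sub_self, Sp_zero]
    push_cast; ring_nf

lemma stSum_add_two (r s : ℕ) (i : ℤ) : stSum T r (s + 2) i = stSum T r (s + 1) (i + 1) := by
  have hlt : ∀ j ∈ range r, stSummand T r (s + 2) i j = stSummand T r (s + 1) (i + 1) j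
      + (stCorrection T r s i (j + 1) - stCorrection T r s i j) :=
    fun j hj => stSummand_add_two_of_lt T s i (mem_range.mp hj)
  rw [stSum, stSum, sum_range_succ, sum_range_succ, stSummand_add_two_self, sum_congr rfl hlt,
    sum_add_distrib, sum_range_sub]
  simp only [stCorrection]
  ring

lemma stSum_succ (r s : ℕ) (i : ℤ) : stSum T r (s + 1) i = stSum T r 1 (i + s) := by
  induction s generalizing i with
  | zero => simp
  | succ s ih => rw [stSum_add_two, ih]; congr 1; push_cast; ring

lemma stSum_succ_one (r : ℕ) (i : ℤ) : stSum T (r + 1) 1 i = 0 := by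
  have hvanish : ∀ j ∈ range r, stSummand T (r + 1) 1 i (j + 2) = 0 := fun j _ => by
    simp [stSummand, Tp_add_two_one]
  rw [stSum, sum_range_succ', sum_range_succ', sum_congr rfl hvanish]
  simp only [sum_const_zero, zero_add, stSummand, Nat.add_sub_cancel, Nat.sub_zero, Sp_one,
    Tp_one_one, Tp_zero, prod_range_succ]
  push_cast
  ring_nf

end

/-- Identity `(S,T)^r_s(i) = Σ_{j=0}^{r} (-1)^j S^{r-j}_s(i) T^{j}_s(i+r-j) = 0`
for all `r, s ≥ 1`. -/
theorem ST_identity (T : ℤ → R) (r s : ℕ) (hr : 1 ≤ r) (hs : 1 ≤ s) (i : ℤ) :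
    ∑ j ∈ Finset.range (r + 1),
      (-1 : R) ^ j * Sp T (r - j) s i * Tp T j s (i + (r : ℤ) - (j : ℤ)) = 0 := by
  obtain ⟨r, rfl⟩ := Nat.exists_eq_add_of_le' hr
  obtain ⟨s, rfl⟩ := Nat.exists_eq_add_of_le' hs
  change stSum T (r + 1) (s + 1) i = 0
  rw [stSum_succ, stSum_succ_one]
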